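/- In the setting of the random walk in the quadrant with kernel data (μ, μ_1, μ_2) satisfying (A1)–(A3), the function x ↦ φ_1(x, Y_1(x)) is strictly convex on [x*_P, x**_P], and if x** < x**_P then: (a) φ_1(x**, Y_1(x**)) = 1; (b) φ_1(x, Y_1(x)) < 1 for all x ∈ (x*, x**); (c) (d/dx) φ_1(x, Y_1(x)) evaluated at x = x** is strictly positive, so x** is a simple zero of x ↦ 1 − φ_1(x, Y_1(x)). -/

import Mathlib

/-- `n`-step transition function of the (sub)Markov chain with one-step kernel `p`. -/
noncomputable def iterK {S : Type*} [DecidableEq S] (p : S → S → ℝ) : ℕ → S → S → ℝ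
  | 0 => fun j k => if j = k then 1 else 0
  | n + 1 => fun j k => ∑' l, iterK p n j l * p l k

/-- One-step kernel of the homogeneous random walk on `ℤ²` with jump law `μ`. -/
noncomputable def homK (μ : ℤ × ℤ → ℝ) : ℤ × ℤ → ℤ × ℤ → ℝ := fun j k => μ (k - j)

/-- Generating function `∑_k ν(k) x^{k₁} y^{k₂}` of a jump measure on `ℤ²`. -/
noncomputable def genG (ν : ℤ × ℤ → ℝ) (x y : ℝ) : ℝ :=
  ∑' k : ℤ × ℤ, ν k * x ^ k.1 * y ^ k.2

/-!
The minimal root `Y₁(x)` of `genG μ x · = 1` is the generating function `∑ⱼ aⱼ xʲ` of a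
nonnegative sequence `a` on `ℤ` that does not depend on `x`: `a` is the minimal solution, obtained
by monotone iteration from `0`, of the coefficient equation `a = ∑ₖ μ(k) δ_{k₁} ∗ a^{∗(k₂+1)}`
(probabilistically, `a` is the law of the horizontal position at the first passage one level down).
Substituting it, `φ₁(x, Y₁(x)) = ∑ⱼ bⱼ xʲ` becomes a Laurent series with nonnegative coefficients.
Irreducibility forces the support of `a` to have at least three points, so a vertical jump of `μ₁`
produces some `bⱼ > 0` with `j ∉ {0, 1}`; since `x ↦ xʲ` is strictly convex on `(0, ∞)` exactly for
such `j`, the series is strictly convex. Convexity of its terms bounds their derivatives by secant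
slopes, which makes the series differentiable inside the interval.

Because `Y₁(x)` minimizes `φ₁(x, ·)` over the admissible `y`, the sublevel set
`{x | φ₁(x, Y₁(x)) ≤ 1}` is `[x*, x**]`; a strictly convex function with such a sublevel set equals
`1` at the interior endpoint `x**`, is `< 1` on `(x*, x**)`, and has a positive derivative at `x**`.
-/

open scoped ENNReal Topology
open Set Filter

theorem strictConvexOn_tsum {ι E : Type*} [AddCommGroup E] [Module ℝ E] {s : Set E}
    {f : ι → E → ℝ} {i₀ : ι} (hf : ∀ i, ConvexOn ℝ s (f i)) (hi₀ : StrictConvexOn ℝ s (f i₀))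
    (hsum : ∀ x ∈ s, Summable fun i => f i x) : StrictConvexOn ℝ s fun x => ∑' i, f i x := by
  refine ⟨hi₀.1, fun x hx y hy hxy a b ha hb hab => ?_⟩
  have hz : a • x + b • y ∈ s := hi₀.1 hx hy ha.le hb.le hab
  calc ∑' i, f i (a • x + b • y) < ∑' i, (a • f i x + b • f i y) :=
        Summable.tsum_lt_tsum (fun i => (hf i).2 hx hy ha.le hb.le hab)
          (hi₀.2 hx hy hxy ha hb hab) (hsum _ hz)
          (((hsum x hx).mul_left a).add ((hsum y hy).mul_left b))
    _ = a • ∑' i, f i x + b • ∑' i, f i y := by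
        simp only [smul_eq_mul]
        rw [Summable.tsum_add ((hsum x hx).mul_left a) ((hsum y hy).mul_left b), tsum_mul_left,
          tsum_mul_left]

theorem ConvexOn.abs_deriv_le {f : ℝ → ℝ} {a b x : ℝ} (hf : ConvexOn ℝ (Icc a b) f)
    (hf0 : ∀ y ∈ Icc a b, 0 ≤ f y) (hx : x ∈ Ioo a b) (hd : DifferentiableAt ℝ f x) :
    |deriv f x| ≤ f a / (x - a) + f b / (b - x) := by
  have haI : a ∈ Icc a b := left_mem_Icc.2 (hx.1.trans hx.2).le
  have hbI : b ∈ Icc a b := right_mem_Icc.2 (hx.1.trans hx.2).le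
  have hxI : x ∈ Icc a b := Ioo_subset_Icc_self hx
  have hlow := hf.slope_le_deriv haI hxI hx.1 hd
  have hup := hf.deriv_le_slope hxI hbI hx.2 hd
  rw [slope_def_field] at hlow hup
  have hA : 0 ≤ f a / (x - a) := div_nonneg (hf0 a haI) (sub_pos.2 hx.1).le
  have hB : 0 ≤ f b / (b - x) := div_nonneg (hf0 b hbI) (sub_pos.2 hx.2).le
  have hlow' : -(f a / (x - a)) ≤ (f x - f a) / (x - a) := by
    rw [← neg_div, div_le_div_iff_of_pos_right (sub_pos.2 hx.1)]; linarith [hf0 x hxI]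
  have hup' : (f b - f x) / (b - x) ≤ f b / (b - x) := by
    rw [div_le_div_iff_of_pos_right (sub_pos.2 hx.2)]; linarith [hf0 x hxI]
  exact abs_le.2 ⟨by linarith, by linarith⟩

theorem hasDerivAt_tsum_of_convexOn {ι : Type*} {f : ι → ℝ → ℝ} {a b x : ℝ}
    (hf : ∀ i, ConvexOn ℝ (Icc a b) (f i)) (hf0 : ∀ i, ∀ y ∈ Icc a b, 0 ≤ f i y)
    (hd : ∀ i, ∀ y ∈ Ioo a b, DifferentiableAt ℝ (f i) y)
    (ha : Summable fun i => f i a) (hb : Summable fun i => f i b) (hx : x ∈ Ioo a b) :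
    HasDerivAt (fun y => ∑' i, f i y) (∑' i, deriv (f i) x) x := by
  have hab : a ≤ b := (hx.1.trans hx.2).le
  obtain ⟨u, hau, hxu⟩ := exists_between hx.1
  obtain ⟨v, hxv, hvb⟩ := exists_between hx.2
  have hsub : Ioo u v ⊆ Ioo a b := Ioo_subset_Ioo hau.le hvb.le
  have hbound : ∀ i, ∀ y ∈ Ioo u v, ‖deriv (f i) y‖ ≤ f i a / (u - a) + f i b / (b - v) := by
    intro i y hy
    refine ((hf i).abs_deriv_le (hf0 i) (hsub hy) (hd i y (hsub hy))).trans (add_le_add ?_ ?_)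
    · exact div_le_div_of_nonneg_left (hf0 i a (left_mem_Icc.2 hab)) (sub_pos.2 hau)
        (by linarith [hy.1])
    · exact div_le_div_of_nonneg_left (hf0 i b (right_mem_Icc.2 hab)) (sub_pos.2 hvb)
        (by linarith [hy.2])
  have hsumx : Summable fun i => f i x := by
    refine Summable.of_nonneg_of_le (fun i => hf0 i x (Ioo_subset_Icc_self hx))
      (fun i => ?_) (ha.add hb)
    exact ((hf i).le_max_of_mem_Icc (left_mem_Icc.2 hab) (right_mem_Icc.2 hab)
      (Ioo_subset_Icc_self hx)).trans
      (max_le_add_of_nonneg (hf0 i a (left_mem_Icc.2 hab)) (hf0 i b (right_mem_Icc.2 hab)))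
  exact hasDerivAt_tsum_of_isPreconnected ((ha.div_const _).add (hb.div_const _)) isOpen_Ioo
    isPreconnected_Ioo (fun i y hy => (hd i y (hsub hy)).hasDerivAt) hbound ⟨hxu, hxv⟩ hsumx
    ⟨hxu, hxv⟩

theorem strictConvexOn_of_hasSum_zpow {s : Set ℝ} (hs : Convex ℝ s) (hs0 : s ⊆ Ioi 0)
    {b : ℤ → ℝ} {φ : ℝ → ℝ} (hb : ∀ j, 0 ≤ b j) {j₀ : ℤ} (hj₀ : j₀ ≠ 0) (hj₁ : j₀ ≠ 1)
    (hbj₀ : 0 < b j₀) (hφ : ∀ x ∈ s, HasSum (fun j => b j * x ^ j) (φ x)) :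
    StrictConvexOn ℝ s φ := by
  have hstrict : StrictConvexOn ℝ s fun x => b j₀ * x ^ j₀ := by
    refine ⟨hs, fun x hx y hy hxy a c ha hc hac => ?_⟩
    have h := (strictConvexOn_zpow hj₀ hj₁).2 (hs0 hx) (hs0 hy) hxy ha hc hac
    simp only [smul_eq_mul] at h ⊢
    nlinarith [mul_lt_mul_of_pos_left h hbj₀]
  exact (strictConvexOn_tsum (fun j => ((convexOn_zpow j).subset hs0 hs).smul (hb j)) hstrict
    fun x hx => (hφ x hx).summable).congr fun x hx => (hφ x hx).tsum_eq

theorem differentiableAt_of_hasSum_zpow {b : ℤ → ℝ} {φ : ℝ → ℝ} {s₁ s₂ x : ℝ} (hs₁ : 0 < s₁)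
    (hb : ∀ j, 0 ≤ b j) (hφ : ∀ y ∈ Icc s₁ s₂, HasSum (fun j => b j * y ^ j) (φ y))
    (hx : x ∈ Ioo s₁ s₂) : DifferentiableAt ℝ φ x := by
  have hpos : Icc s₁ s₂ ⊆ Ioi 0 := fun y hy => hs₁.trans_le hy.1
  have hs : s₁ ≤ s₂ := (hx.1.trans hx.2).le
  have hderiv := hasDerivAt_tsum_of_convexOn (f := fun j y => b j * y ^ j)
    (fun j => ((convexOn_zpow j).subset hpos (convex_Icc _ _)).smul (hb j))
    (fun j y hy => mul_nonneg (hb j) (zpow_nonneg (hpos hy).le j))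
    (fun j y hy => ((differentiableAt_zpow.2 (.inl (hpos (Ioo_subset_Icc_self hy)).ne'))).const_mul
      (b j))
    (hφ s₁ (left_mem_Icc.2 hs)).summable (hφ s₂ (right_mem_Icc.2 hs)).summable hx
  refine hderiv.differentiableAt.congr_of_eventuallyEq ?_
  filter_upwards [Ioo_mem_nhds hx.1 hx.2] with y hy
  exact (hφ y (Ioo_subset_Icc_self hy)).tsum_eq.symm

theorem StrictConvexOn.sublevel_eq_Icc {f : ℝ → ℝ} {p q a c t : ℝ}
    (hf : StrictConvexOn ℝ (Icc p q) f) (hlevel : ∀ x ∈ Icc p q, f x ≤ t ↔ x ∈ Icc a c)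
    (hpa : p ≤ a) (hac : a < c) (hcq : c < q) (hd : DifferentiableAt ℝ f c) :
    f c = t ∧ (∀ x ∈ Ioo a c, f x < t) ∧ 0 < deriv f c := by
  have haI : a ∈ Icc p q := ⟨hpa, hac.le.trans hcq.le⟩
  have hcI : c ∈ Icc p q := ⟨hpa.trans hac.le, hcq.le⟩
  have hfa : f a ≤ t := (hlevel a haI).2 ⟨le_rfl, hac.le⟩
  have hfc : f c ≤ t := (hlevel c hcI).2 ⟨hac.le, le_rfl⟩
  have hright : ∀ᶠ y in 𝓝[>] c, t ≤ f y := by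
    filter_upwards [Ioo_mem_nhdsGT hcq] with y hy
    by_contra! hlt
    exact hy.1.not_ge ((hlevel y ⟨by linarith [hy.1], hy.2.le⟩).1 hlt.le).2
  have hfc_eq : f c = t :=
    le_antisymm hfc (ge_of_tendsto (hd.continuousAt.tendsto.mono_left nhdsWithin_le_nhds) hright)
  have hlt : ∀ x ∈ Ioo a c, f x < t := fun x hx =>
    (hf.lt_on_openSegment haI hcI hac.ne (by rwa [openSegment_eq_Ioo hac])).trans_le
      (max_le hfa hfc)
  refine ⟨hfc_eq, hlt, ?_⟩
  have hm : (a + c) / 2 ∈ Ioo a c := ⟨by linarith, by linarith⟩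
  calc 0 < slope f ((a + c) / 2) c := by
        rw [slope_def_field, hfc_eq]
        exact div_pos (sub_pos.2 (hlt _ hm)) (sub_pos.2 hm.2)
    _ ≤ deriv f c := hf.convexOn.slope_le_deriv ⟨by linarith [hm.1], hm.2.le.trans hcq.le⟩ hcI
        hm.2 hd

namespace QuadrantWalk

noncomputable def zconv (A B : ℤ → ℝ≥0∞) (j : ℤ) : ℝ≥0∞ := ∑' i, A i * B (j - i)

noncomputable def zconvPow (A : ℤ → ℝ≥0∞) : ℕ → ℤ → ℝ≥0∞
  | 0 => fun j => if j = 0 then 1 else 0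
  | n + 1 => zconv A (zconvPow A n)

noncomputable def laurentEval (A : ℤ → ℝ≥0∞) (x : ℝ) : ℝ≥0∞ :=
  ∑' j, A j * ENNReal.ofReal (x ^ j)

theorem ofReal_zpow_add {x : ℝ} (hx : 0 < x) (i j : ℤ) :
    ENNReal.ofReal (x ^ (i + j)) = ENNReal.ofReal (x ^ i) * ENNReal.ofReal (x ^ j) := by
  rw [zpow_add₀ hx.ne', ENNReal.ofReal_mul (zpow_nonneg hx.le _)]

theorem laurentEval_zconv (A B : ℤ → ℝ≥0∞) {x : ℝ} (hx : 0 < x) :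
    laurentEval (zconv A B) x = laurentEval A x * laurentEval B x := by
  simp only [laurentEval, zconv, ← ENNReal.tsum_mul_right]
  rw [ENNReal.tsum_comm]
  refine tsum_congr fun i => ?_
  rw [← (Equiv.addLeft i).tsum_eq, ← ENNReal.tsum_mul_left]
  refine tsum_congr fun w => ?_
  simp only [Equiv.coe_addLeft, add_sub_cancel_left, ofReal_zpow_add hx]
  ring

theorem laurentEval_zconvPow (A : ℤ → ℝ≥0∞) {x : ℝ} (hx : 0 < x) (n : ℕ) :
    laurentEval (zconvPow A n) x = laurentEval A x ^ n := by
  induction n with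
  | zero => simp [laurentEval, zconvPow, tsum_ite_eq]
  | succ n ih => rw [zconvPow, laurentEval_zconv _ _ hx, ih, pow_succ']

theorem zconv_mono {A A' B B' : ℤ → ℝ≥0∞} (hA : A ≤ A') (hB : B ≤ B') :
    zconv A B ≤ zconv A' B' :=
  fun _ => ENNReal.tsum_le_tsum fun _ => mul_le_mul' (hA _) (hB _)

theorem zconvPow_mono {A A' : ℤ → ℝ≥0∞} (hA : A ≤ A') (n : ℕ) : zconvPow A n ≤ zconvPow A' n := by
  induction n with
  | zero => exact le_rfl
  | succ n ih => exact zconv_mono hA ih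

theorem mul_zconvPow_le (A : ℤ → ℝ≥0∞) (n : ℕ) (i j : ℤ) :
    A i * zconvPow A n j ≤ zconvPow A (n + 1) (i + j) := by
  simpa [zconvPow, zconv] using ENNReal.le_tsum (f := fun l => A l * zconvPow A n (i + j - l)) i

theorem pow_le_zconvPow (A : ℤ → ℝ≥0∞) (n : ℕ) (i : ℤ) : A i ^ n ≤ zconvPow A n (n * i) := by
  induction n with
  | zero => simp [zconvPow]
  | succ n ih =>
    calc A i ^ (n + 1) = A i * A i ^ n := pow_succ' _ _
      _ ≤ A i * zconvPow A n (n * i) := mul_le_mul' le_rfl ih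
      _ ≤ zconvPow A (n + 1) (i + n * i) := mul_zconvPow_le A n i _
      _ = zconvPow A (n + 1) ((n + 1 : ℕ) * i) := by push_cast; ring_nf

theorem tsum_iSup_of_monotone {ι : Type*} {f : ℕ → ι → ℝ≥0∞} (hf : Monotone f) :
    ∑' i, ⨆ n, f n i = ⨆ n, ∑' i, f n i := by
  refine le_antisymm ?_ (iSup_le fun n => ENNReal.tsum_le_tsum fun i => le_iSup (f · i) n)
  rw [ENNReal.tsum_eq_iSup_sum]
  refine iSup_le fun s => ?_
  rw [ENNReal.finsetSum_iSup_of_monotone fun i _ _ hnm => hf hnm i]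
  exact iSup_mono fun n => ENNReal.sum_le_tsum s

theorem iSup_mul_iSup_of_monotone {a b : ℕ → ℝ≥0∞} (ha : Monotone a) (hb : Monotone b) :
    (⨆ n, a n) * (⨆ n, b n) = ⨆ n, a n * b n := by
  refine le_antisymm ?_ (iSup_le fun n => mul_le_mul' (le_iSup a n) (le_iSup b n))
  simp only [ENNReal.iSup_mul, ENNReal.mul_iSup]
  exact iSup₂_le fun m k => le_iSup_of_le (max m k)
    (mul_le_mul' (ha (by omega)) (hb (by omega)))

theorem zconv_iSup {F G : ℕ → ℤ → ℝ≥0∞} (hF : Monotone F) (hG : Monotone G) :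
    zconv (⨆ n, F n) (⨆ n, G n) = ⨆ n, zconv (F n) (G n) := by
  funext j
  simp only [zconv, iSup_apply]
  rw [← tsum_iSup_of_monotone (f := fun n i => F n i * G n (j - i))
    fun n m hnm i => mul_le_mul' (hF hnm i) (hG hnm _)]
  exact tsum_congr fun i => iSup_mul_iSup_of_monotone (fun _ _ h => hF h i) (fun _ _ h => hG h _)

theorem zconvPow_iSup {F : ℕ → ℤ → ℝ≥0∞} (hF : Monotone F) (n : ℕ) :
    zconvPow (⨆ m, F m) n = ⨆ m, zconvPow (F m) n := by
  induction n with
  | zero => simp [zconvPow]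
  | succ n ih =>
    simp only [zconvPow]
    rw [ih, zconv_iSup hF fun _ _ h => zconvPow_mono (hF h) n]

theorem laurentEval_iSup {F : ℕ → ℤ → ℝ≥0∞} (hF : Monotone F) (x : ℝ) :
    laurentEval (⨆ n, F n) x = ⨆ n, laurentEval (F n) x := by
  simp only [laurentEval, iSup_apply, ENNReal.iSup_mul]
  exact tsum_iSup_of_monotone fun n m hnm j => mul_le_mul' (hF hnm j) le_rfl

/- The exponent `k.2 + e` is truncated at `0` by `toNat`; the lemmas below assume that `ν` vanishes
wherever `k.2 + e < 0`. -/
noncomputable def jumpOp (ν : ℤ × ℤ → ℝ) (e : ℤ) (A : ℤ → ℝ≥0∞) (j : ℤ) : ℝ≥0∞ :=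
  ∑' k : ℤ × ℤ, ENNReal.ofReal (ν k) * zconvPow A (k.2 + e).toNat (j - k.1)

noncomputable def jumpGen (ν : ℤ × ℤ → ℝ) (e : ℤ) (x : ℝ) (y : ℝ≥0∞) : ℝ≥0∞ :=
  ∑' k : ℤ × ℤ, ENNReal.ofReal (ν k) * ENNReal.ofReal (x ^ k.1) * y ^ (k.2 + e).toNat

section JumpOperator

variable {ν : ℤ × ℤ → ℝ} {e : ℤ}

theorem laurentEval_jumpOp (A : ℤ → ℝ≥0∞) {x : ℝ} (hx : 0 < x) :
    laurentEval (jumpOp ν e A) x = jumpGen ν e x (laurentEval A x) := by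
  simp only [laurentEval, jumpOp, jumpGen, ← ENNReal.tsum_mul_right]
  rw [ENNReal.tsum_comm]
  refine tsum_congr fun k => ?_
  have hpow := laurentEval_zconvPow A hx (k.2 + e).toNat
  simp only [laurentEval] at hpow
  rw [← (Equiv.addLeft k.1).tsum_eq, ← hpow, ← ENNReal.tsum_mul_left]
  refine tsum_congr fun w => ?_
  simp only [Equiv.coe_addLeft, add_sub_cancel_left, ofReal_zpow_add hx]
  ring

theorem jumpOp_mono : Monotone (jumpOp ν e) :=
  fun _ _ hA _ => ENNReal.tsum_le_tsum fun _ => mul_le_mul' le_rfl (zconvPow_mono hA _ _)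

theorem jumpOp_iSup {F : ℕ → ℤ → ℝ≥0∞} (hF : Monotone F) :
    jumpOp ν e (⨆ n, F n) = ⨆ n, jumpOp ν e (F n) := by
  funext j
  simp only [jumpOp, iSup_apply, zconvPow_iSup hF, ENNReal.mul_iSup]
  exact tsum_iSup_of_monotone fun n m hnm k =>
    mul_le_mul' le_rfl (zconvPow_mono (hF hnm) _ _)

theorem jumpGen_mono (x : ℝ) : Monotone (jumpGen ν e x) :=
  fun _ _ hy => ENNReal.tsum_le_tsum fun _ => mul_le_mul' le_rfl (pow_le_pow_left' hy _)

theorem genG_nonneg (hν : ∀ k, 0 ≤ ν k) {x y : ℝ} (hx : 0 ≤ x) (hy : 0 ≤ y) :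
    0 ≤ genG ν x y :=
  tsum_nonneg fun k => by have := hν k; positivity

theorem genG_le_genG_of_le (hν : ∀ k, 0 ≤ ν k)
    (hνsupp : ∀ k : ℤ × ℤ, k.2 < 0 → ν k = 0) {x y y' : ℝ} (hx : 0 ≤ x) (hy : 0 ≤ y)
    (hyy' : y ≤ y') (hsum : Summable fun k : ℤ × ℤ => ν k * x ^ k.1 * y' ^ k.2) :
    genG ν x y ≤ genG ν x y' := by
  have hterm : ∀ k : ℤ × ℤ, ν k * x ^ k.1 * y ^ k.2 ≤ ν k * x ^ k.1 * y' ^ k.2 := fun k => by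
    by_cases hk : ν k = 0
    · simp [hk]
    · exact mul_le_mul_of_nonneg_left
        (zpow_le_zpow_left₀ (not_lt.1 fun h => hk (hνsupp k h)) hy hyy')
        (mul_nonneg (hν k) (zpow_nonneg hx _))
  exact Summable.tsum_le_tsum hterm
    (hsum.of_nonneg_of_le (fun k => by have := hν k; positivity) hterm) hsum

section RealValues

variable (hν : ∀ k, 0 ≤ ν k) (hνe : ∀ k : ℤ × ℤ, k.2 + e < 0 → ν k = 0) {x y : ℝ}
include hν hνe

theorem jumpGen_ofReal (hx : 0 ≤ x) (hy : 0 ≤ y) :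
    jumpGen ν e x (ENNReal.ofReal y) =
      ∑' k : ℤ × ℤ, ENNReal.ofReal (ν k * x ^ k.1 * y ^ (k.2 + e)) := by
  refine tsum_congr fun k => ?_
  by_cases hk : ν k = 0
  · simp [hk]
  · rw [ENNReal.ofReal_mul (mul_nonneg (hν k) (zpow_nonneg hx _)), ENNReal.ofReal_mul (hν k),
      ← ENNReal.ofReal_pow hy, ← zpow_natCast, Int.toNat_of_nonneg (not_lt.1 fun h => hk (hνe k h))]

theorem jumpGen_ofReal_eq (hx : 0 < x) (hy : 0 < y)
    (hsum : Summable fun k : ℤ × ℤ => ν k * x ^ k.1 * y ^ k.2) :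
    jumpGen ν e x (ENNReal.ofReal y) = ENNReal.ofReal (genG ν x y * y ^ e) := by
  have hterm : ∀ k : ℤ × ℤ, ν k * x ^ k.1 * y ^ (k.2 + e) = ν k * x ^ k.1 * y ^ k.2 * y ^ e :=
    fun k => by rw [zpow_add₀ hy.ne']; ring
  simp only [jumpGen_ofReal hν hνe hx.le hy.le, hterm, genG, ← tsum_mul_right]
  exact (ENNReal.ofReal_tsum_of_nonneg (fun k => by
    have := hν k; positivity) (hsum.mul_right _)).symm

theorem summable_of_jumpGen_ne_top (hx : 0 < x) (hy : 0 < y)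
    (hfin : jumpGen ν e x (ENNReal.ofReal y) ≠ ∞) :
    Summable fun k : ℤ × ℤ => ν k * x ^ k.1 * y ^ k.2 := by
  rw [jumpGen_ofReal hν hνe hx.le hy.le] at hfin
  refine (summable_mul_right_iff (zpow_ne_zero e hy.ne')).1 ((ENNReal.summable_toReal hfin).congr
    fun k => ?_)
  rw [ENNReal.toReal_ofReal (by have := hν k; positivity), zpow_add₀ hy.ne']
  ring

end RealValues

end JumpOperator

noncomputable def minSol (μ : ℤ × ℤ → ℝ) : ℤ → ℝ≥0∞ := ⨆ n, (jumpOp μ 1)^[n] 0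

variable {μ : ℤ × ℤ → ℝ}

theorem monotone_iterate_jumpOp : Monotone fun n => (jumpOp μ 1)^[n] 0 :=
  jumpOp_mono.monotone_iterate_of_le_map bot_le

theorem jumpOp_minSol : jumpOp μ 1 (minSol μ) = minSol μ := by
  rw [minSol, jumpOp_iSup monotone_iterate_jumpOp]
  simp only [← Function.iterate_succ_apply' (jumpOp μ 1)]
  exact monotone_iterate_jumpOp.iSup_nat_add 1

theorem ofReal_mul_pow_le_minSol (k : ℤ × ℤ) (i : ℤ) :
    ENNReal.ofReal (μ k) * minSol μ i ^ (k.2 + 1).toNat ≤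
      minSol μ (k.1 + (k.2 + 1).toNat * i) :=
  calc ENNReal.ofReal (μ k) * minSol μ i ^ (k.2 + 1).toNat
      ≤ ENNReal.ofReal (μ k) * zconvPow (minSol μ) (k.2 + 1).toNat ((k.2 + 1).toNat * i) :=
        mul_le_mul' le_rfl (pow_le_zconvPow _ _ _)
    _ ≤ jumpOp μ 1 (minSol μ) (k.1 + (k.2 + 1).toNat * i) := by
        simpa [jumpOp] using ENNReal.le_tsum (f := fun l : ℤ × ℤ => ENNReal.ofReal (μ l) *
          zconvPow (minSol μ) (l.2 + 1).toNat (k.1 + (k.2 + 1).toNat * i - l.1)) k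
    _ = minSol μ (k.1 + (k.2 + 1).toNat * i) := by rw [jumpOp_minSol]

section MinimalSolution

variable (hμ : ∀ k, 0 ≤ μ k) (hμsupp : ∀ k : ℤ × ℤ, k.2 < -1 → μ k = 0)
include hμ hμsupp

theorem laurentEval_minSol_le {x y : ℝ} (hx : 0 < x) (hy : 0 < y)
    (hsum : Summable fun k : ℤ × ℤ => μ k * x ^ k.1 * y ^ k.2) (hle : genG μ x y ≤ 1) :
    laurentEval (minSol μ) x ≤ ENNReal.ofReal y := by
  rw [minSol, laurentEval_iSup monotone_iterate_jumpOp]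
  refine iSup_le fun n => ?_
  induction n with
  | zero => simp [laurentEval]
  | succ n ih =>
    rw [Function.iterate_succ_apply', laurentEval_jumpOp _ hx]
    calc jumpGen μ 1 x (laurentEval ((jumpOp μ 1)^[n] 0) x)
        ≤ jumpGen μ 1 x (ENNReal.ofReal y) := jumpGen_mono x ih
      _ = ENNReal.ofReal (genG μ x y * y) := by
        rw [jumpGen_ofReal_eq hμ (fun k hk => hμsupp k (by omega)) hx hy hsum, zpow_one]
      _ ≤ ENNReal.ofReal y := ENNReal.ofReal_le_ofReal (mul_le_of_le_one_left hy.le hle)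

theorem laurentEval_minSol_eq {x Y : ℝ} (hx : 0 < x) (hY : 0 < Y)
    (hsum : Summable fun k : ℤ × ℤ => μ k * x ^ k.1 * Y ^ k.2) (hroot : genG μ x Y = 1)
    (hmin : ∀ y, 0 < y → genG μ x y = 1 → Y ≤ y) (hdown : ∃ k : ℤ × ℤ, k.2 = -1 ∧ 0 < μ k) :
    laurentEval (minSol μ) x = ENNReal.ofReal Y := by
  have hLY := laurentEval_minSol_le hμ hμsupp hx hY hsum hroot.le
  have hL0 : 0 < laurentEval (minSol μ) x := by
    obtain ⟨k, hk2, hk⟩ := hdown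
    have hstep := ofReal_mul_pow_le_minSol (μ := μ) k 0
    rw [hk2] at hstep
    calc 0 < ENNReal.ofReal (μ k) * ENNReal.ofReal (x ^ k.1) := by
          simp [ENNReal.ofReal_pos.2 hk, zpow_pos hx]
      _ ≤ minSol μ k.1 * ENNReal.ofReal (x ^ k.1) := by simpa using mul_le_mul' hstep le_rfl
      _ ≤ laurentEval (minSol μ) x := ENNReal.le_tsum k.1
  obtain ⟨ℓ, hL⟩ : ∃ ℓ, laurentEval (minSol μ) x = ENNReal.ofReal ℓ :=
    ⟨_, (ENNReal.ofReal_toReal (ne_top_of_le_ne_top ENNReal.ofReal_ne_top hLY)).symm⟩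
  rw [hL] at hLY hL0 ⊢
  have hℓ : 0 < ℓ := ENNReal.ofReal_pos.1 hL0
  have hμ1 : ∀ k : ℤ × ℤ, k.2 + 1 < 0 → μ k = 0 := fun k hk => hμsupp k (by omega)
  have hfix : jumpGen μ 1 x (ENNReal.ofReal ℓ) = ENNReal.ofReal ℓ := by
    rw [← hL, ← laurentEval_jumpOp _ hx, jumpOp_minSol]
  have hsumℓ := summable_of_jumpGen_ne_top hμ hμ1 hx hℓ (hfix.symm ▸ ENNReal.ofReal_ne_top)
  rw [jumpGen_ofReal_eq hμ hμ1 hx hℓ hsumℓ, zpow_one,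
    ENNReal.ofReal_eq_ofReal_iff (mul_nonneg (genG_nonneg hμ hx.le hℓ.le) hℓ.le) hℓ.le,
    mul_eq_right₀ hℓ.ne'] at hfix
  rw [le_antisymm ((ENNReal.ofReal_le_ofReal_iff hY.le).1 hLY) (hmin ℓ hℓ hfix)]

end MinimalSolution

theorem iterK_nonneg {S : Type*} [DecidableEq S] {p : S → S → ℝ} (hp : ∀ j k, 0 ≤ p j k) :
    ∀ n j k, 0 ≤ iterK p n j k
  | 0, j, k => by unfold iterK; positivity
  | n + 1, j, k => tsum_nonneg fun l => mul_nonneg (iterK_nonneg hp n j l) (hp l k)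

theorem mem_of_iterK_pos {S : Type*} [DecidableEq S] {p : S → S → ℝ} (hp : ∀ j k, 0 ≤ p j k)
    {T : Set S} (hT : ∀ l k, l ∈ T → 0 < p l k → k ∈ T) {j : S} (hj : j ∈ T) :
    ∀ {n k}, 0 < iterK p n j k → k ∈ T
  | 0, k, hpos => by
    by_cases h : j = k
    · exact h ▸ hj
    · simp [iterK, h] at hpos
  | n + 1, k, hpos => by
    obtain ⟨l, hl⟩ : ∃ l, iterK p n j l * p l k ≠ 0 := by
      by_contra! hall
      simp [iterK, hall] at hpos
    have h₁ := (iterK_nonneg hp n j l).lt_of_ne' (left_ne_zero_of_mul hl)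
    have h₂ := (hp l k).lt_of_ne' (right_ne_zero_of_mul hl)
    exact hT l k (mem_of_iterK_pos hp hT hj h₁) h₂

theorem exists_pos_not_of_irreducible (hμ : ∀ k, 0 ≤ μ k)
    (hirr : ∀ j k : ℤ × ℤ, ∃ n, 0 < iterK (homK μ) n j k) {P : ℤ × ℤ → Prop} (h0 : P 0)
    (hadd : ∀ p q, P p → P q → P (p + q)) {k : ℤ × ℤ} (hk : ¬ P k) : ∃ d, 0 < μ d ∧ ¬ P d := by
  by_contra! hall
  obtain ⟨n, hn⟩ := hirr 0 k
  refine hk (mem_of_iterK_pos (T := {q | P q}) (fun _ _ => hμ _) (fun l q hl hq => ?_) h0 hn)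
  simpa using hadd l (q - l) hl (hall _ hq)

theorem exists_three_mem_of_affine_closed {S : Set ℤ} {J : Set (ℤ × ℤ)} (hS : S.Nonempty)
    (hmaps : ∀ d ∈ J, ∀ i ∈ S, d.1 + (d.2 + 1) * i ∈ S)
    (hmove : ∀ i, ∃ d ∈ J, d.1 + d.2 * i ≠ 0) (hup : ∃ d ∈ J, 0 < d.2) :
    ∃ i₁ ∈ S, ∃ i₂ ∈ S, ∃ i₃ ∈ S, i₁ ≠ i₂ ∧ i₁ ≠ i₃ ∧ i₂ ≠ i₃ := by
  obtain ⟨i, hi⟩ := hS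
  obtain ⟨d, hd, hdi⟩ := hmove i
  set i' := d.1 + (d.2 + 1) * i
  have hi' : i' ∈ S := hmaps d hd i hi
  have hne : i ≠ i' := fun h => hdi (by linarith)
  obtain ⟨u, hu, hu2⟩ := hup
  by_contra! hno
  have hpair : ∀ p ∈ S, p = i ∨ p = i' := fun p hp => by
    by_cases h : i = p
    · exact .inl h.symm
    · exact .inr (hno _ hi _ hi' _ hp hne h).symm
  -- the jump `u` stretches the gap `i' - i` by the factor `u.2 + 1 ≥ 2`; `{i, i'}` cannot absorb it
  obtain ⟨c, hc₁, hc₂, hcD⟩ : ∃ c : ℤ, -1 ≤ c ∧ c ≤ 1 ∧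
      (u.1 + (u.2 + 1) * i') - (u.1 + (u.2 + 1) * i) = c * (i' - i) := by
    rcases hpair _ (hmaps u hu i hi) with h | h <;>
      rcases hpair _ (hmaps u hu i' hi') with h' | h' <;> rw [h, h']
    exacts [⟨0, by simp⟩, ⟨1, by simp⟩, ⟨-1, by simp⟩, ⟨0, by simp⟩]
  have hfactor : (u.2 + 1) * (i' - i) = c * (i' - i) := by rw [← hcD]; ring
  have := mul_right_cancel₀ (sub_ne_zero.2 hne.symm) hfactor
  omega

section Support

variable (hμ : ∀ k, 0 ≤ μ k) (hμsupp : ∀ k : ℤ × ℤ, k.2 < -1 → μ k = 0)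
  (hirr : ∀ j k : ℤ × ℤ, ∃ n, 0 < iterK (homK μ) n j k)
include hμ hμsupp hirr

theorem exists_jump_down : ∃ k : ℤ × ℤ, k.2 = -1 ∧ 0 < μ k := by
  obtain ⟨d, hd, hd2⟩ := exists_pos_not_of_irreducible hμ hirr (P := fun p => 0 ≤ p.2) le_rfl
    (fun _ _ => add_nonneg) (k := (0, -1)) (by simp)
  have hlow : -1 ≤ d.2 := not_lt.1 fun h => hd.ne' (hμsupp d h)
  exact ⟨d, by have := not_le.1 hd2; omega, hd⟩

theorem exists_three_minSol_pos :
    ∃ i₁, 0 < minSol μ i₁ ∧ ∃ i₂, 0 < minSol μ i₂ ∧ ∃ i₃, 0 < minSol μ i₃ ∧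
      i₁ ≠ i₂ ∧ i₁ ≠ i₃ ∧ i₂ ≠ i₃ := by
  refine exists_three_mem_of_affine_closed (S := {i | 0 < minSol μ i}) (J := {d | 0 < μ d}) ?_
    (fun d hd i hi => ?_)
    (fun i => exists_pos_not_of_irreducible hμ hirr (P := fun p => p.1 + p.2 * i = 0)
      (by simp) (fun p q hp hq => by simp only [Prod.fst_add, Prod.snd_add]; linarith)
      (k := (1, 0)) (by simp)) ?_
  · obtain ⟨k, hk2, hk⟩ := exists_jump_down hμ hμsupp hirr
    have := ofReal_mul_pow_le_minSol (μ := μ) k 0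
    rw [hk2] at this
    exact ⟨k.1, (ENNReal.ofReal_pos.2 hk).trans_le (by simpa using this)⟩
  · have hd2 : 0 ≤ d.2 + 1 := by
      by_contra h
      exact (ne_of_gt hd) (hμsupp d (by omega))
    have := ofReal_mul_pow_le_minSol (μ := μ) d i
    rw [Int.toNat_of_nonneg hd2] at this
    exact (ENNReal.mul_pos (ENNReal.ofReal_pos.2 hd).ne' (ENNReal.pow_pos hi _).ne').trans_le this
  · obtain ⟨d, hd, hd2⟩ := exists_pos_not_of_irreducible hμ hirr (P := fun p => p.2 ≤ 0) le_rfl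
      (fun _ _ => add_nonpos) (k := (0, 1)) (by simp)
    exact ⟨d, hd, not_le.1 hd2⟩

end Support

theorem exists_jumpOp_pos_of_three {ν : ℤ × ℤ → ℝ} {A : ℤ → ℝ≥0∞} {kv : ℤ × ℤ}
    (hkv : 0 < kv.2) (hνkv : 0 < ν kv) {i₁ i₂ i₃ : ℤ} (h₁ : 0 < A i₁) (h₂ : 0 < A i₂)
    (h₃ : 0 < A i₃) (h₁₂ : i₁ ≠ i₂) (h₁₃ : i₁ ≠ i₃) (h₂₃ : i₂ ≠ i₃) :
    ∃ j, j ≠ 0 ∧ j ≠ 1 ∧ 0 < jumpOp ν 0 A j := by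
  obtain ⟨n, hn⟩ : ∃ n : ℕ, kv.2.toNat = n + 1 := ⟨kv.2.toNat - 1, by omega⟩
  have hpos : ∀ i, 0 < A i → 0 < jumpOp ν 0 A (kv.1 + (i + n * i₁)) := fun i hi =>
    calc 0 < ENNReal.ofReal (ν kv) * (A i * A i₁ ^ n) :=
          ENNReal.mul_pos (ENNReal.ofReal_pos.2 hνkv).ne'
            (ENNReal.mul_pos hi.ne' (ENNReal.pow_pos h₁ n).ne').ne'
      _ ≤ ENNReal.ofReal (ν kv) * zconvPow A (n + 1) (i + n * i₁) :=
          mul_le_mul' le_rfl ((mul_le_mul' le_rfl (pow_le_zconvPow A n i₁)).trans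
            (mul_zconvPow_le A n i _))
      _ ≤ jumpOp ν 0 A (kv.1 + (i + n * i₁)) := by
          simpa [jumpOp, hn] using ENNReal.le_tsum (f := fun k : ℤ × ℤ => ENNReal.ofReal (ν k) *
            zconvPow A (k.2 + 0).toNat (kv.1 + (i + n * i₁) - k.1)) kv
  generalize (n : ℤ) * i₁ = t at hpos
  rcases (by omega : (kv.1 + (i₁ + t) ≠ 0 ∧ kv.1 + (i₁ + t) ≠ 1) ∨
      (kv.1 + (i₂ + t) ≠ 0 ∧ kv.1 + (i₂ + t) ≠ 1) ∨
      (kv.1 + (i₃ + t) ≠ 0 ∧ kv.1 + (i₃ + t) ≠ 1)) with h | h | h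
  exacts [⟨_, h.1, h.2, hpos i₁ h₁⟩, ⟨_, h.1, h.2, hpos i₂ h₂⟩, ⟨_, h.1, h.2, hpos i₃ h₃⟩]

theorem exists_hasSum_zpow_genG {μ₁ : ℤ × ℤ → ℝ} (hμ : ∀ k, 0 ≤ μ k)
    (hμsupp : ∀ k : ℤ × ℤ, k.2 < -1 → μ k = 0)
    (hirr : ∀ j k : ℤ × ℤ, ∃ n, 0 < iterK (homK μ) n j k) (hμ₁ : ∀ k, 0 ≤ μ₁ k)
    (hμ₁supp : ∀ k : ℤ × ℤ, k.2 < 0 → μ₁ k = 0) (hvert : ∃ k : ℤ × ℤ, 0 < k.2 ∧ 0 < μ₁ k)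
    {s : Set ℝ} {Y : ℝ → ℝ} (hs : s.Nonempty) (hs0 : s ⊆ Ioi 0)
    (hY : ∀ x ∈ s, 0 < Y x ∧ genG μ x (Y x) = 1 ∧ ∀ y, 0 < y → genG μ x y = 1 → Y x ≤ y)
    (hsum : ∀ x ∈ s, Summable (fun k : ℤ × ℤ => μ k * x ^ k.1 * Y x ^ k.2) ∧
      Summable (fun k : ℤ × ℤ => μ₁ k * x ^ k.1 * Y x ^ k.2)) :
    ∃ b : ℤ → ℝ, (∀ j, 0 ≤ b j) ∧ (∃ j, j ≠ 0 ∧ j ≠ 1 ∧ 0 < b j) ∧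
      ∀ x ∈ s, HasSum (fun j => b j * x ^ j) (genG μ₁ x (Y x)) := by
  set B := jumpOp μ₁ 0 (minSol μ)
  have hB : ∀ x ∈ s, laurentEval B x = ENNReal.ofReal (genG μ₁ x (Y x)) := fun x hx => by
    obtain ⟨hYx, hroot, hmin⟩ := hY x hx
    rw [laurentEval_jumpOp _ (hs0 hx), laurentEval_minSol_eq hμ hμsupp (hs0 hx) hYx
      (hsum x hx).1 hroot hmin (exists_jump_down hμ hμsupp hirr),
      jumpGen_ofReal_eq hμ₁ (by simpa using hμ₁supp) (hs0 hx) hYx (hsum x hx).2, zpow_zero,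
      mul_one]
  have hBfin : ∀ j, B j ≠ ∞ := fun j hj => by
    obtain ⟨x, hx⟩ := hs
    have : B j * ENNReal.ofReal (x ^ j) ≤ laurentEval B x := ENNReal.le_tsum j
    rw [hj, ENNReal.top_mul (ENNReal.ofReal_pos.2 (zpow_pos (hs0 hx) j)).ne', hB x hx] at this
    exact ENNReal.ofReal_ne_top (top_le_iff.1 this)
  refine ⟨fun j => (B j).toReal, fun j => ENNReal.toReal_nonneg, ?_, fun x hx => ?_⟩
  · obtain ⟨kv, hkv, hμkv⟩ := hvert
    obtain ⟨i₁, h₁, i₂, h₂, i₃, h₃, h₁₂, h₁₃, h₂₃⟩ := exists_three_minSol_pos hμ hμsupp hirr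
    obtain ⟨j, hj0, hj1, hj⟩ := exists_jumpOp_pos_of_three hkv hμkv h₁ h₂ h₃ h₁₂ h₁₃ h₂₃
    exact ⟨j, hj0, hj1, ENNReal.toReal_pos hj.ne' (hBfin j)⟩
  · have hx0 : 0 < x := hs0 hx
    convert ENNReal.hasSum_toReal ((hB x hx).trans_ne ENNReal.ofReal_ne_top) using 1
    · funext j
      rw [ENNReal.toReal_mul, ENNReal.toReal_ofReal (zpow_nonneg hx0.le j)]
    · rw [← ENNReal.tsum_toReal_eq fun j => ENNReal.mul_ne_top (hBfin j) ENNReal.ofReal_ne_top]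
      exact (congrArg ENNReal.toReal (hB x hx)).trans
        (ENNReal.toReal_ofReal (genG_nonneg hμ₁ hx0.le (hY x hx).1.le)) |>.symm

theorem genG_minRoot_le_one_iff {μ₁ : ℤ × ℤ → ℝ} (hμ : ∀ k, 0 ≤ μ k)
    (hμsupp : ∀ k : ℤ × ℤ, k.2 < -1 → μ k = 0) (hdown : ∃ k : ℤ × ℤ, k.2 = -1 ∧ 0 < μ k)
    (hμ₁ : ∀ k, 0 ≤ μ₁ k) (hμ₁supp : ∀ k : ℤ × ℤ, k.2 < 0 → μ₁ k = 0) {x Y : ℝ} (hx : 0 < x)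
    (hY : 0 < Y ∧ genG μ x Y = 1 ∧ ∀ y, 0 < y → genG μ x y = 1 → Y ≤ y)
    (hsum : ∀ y, 0 < y → genG μ x y ≤ 1 → Summable (fun k : ℤ × ℤ => μ k * x ^ k.1 * y ^ k.2) ∧
      Summable (fun k : ℤ × ℤ => μ₁ k * x ^ k.1 * y ^ k.2)) :
    genG μ₁ x Y ≤ 1 ↔ ∃ y, 0 < y ∧ genG μ x y ≤ 1 ∧ genG μ₁ x y ≤ 1 := by
  obtain ⟨hY0, hroot, hmin⟩ := hY
  refine ⟨fun h => ⟨Y, hY0, hroot.le, h⟩, fun ⟨y, hy, hle, hle₁⟩ => ?_⟩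
  have hYy : Y ≤ y := by
    have h := laurentEval_minSol_le hμ hμsupp hx hy (hsum y hy hle).1 hle
    rw [laurentEval_minSol_eq hμ hμsupp hx hY0 (hsum Y hY0 hroot.le).1 hroot hmin hdown] at h
    exact (ENNReal.ofReal_le_ofReal_iff hy.le).1 h
  exact (genG_le_genG_of_le hμ₁ hμ₁supp hx.le hY0.le hYy (hsum y hy hle).2).trans hle₁

end QuadrantWalk

open QuadrantWalk in
theorem phi1_Y1_strictly_convex_and_simple_zero_general
    (μ μ₁ : ℤ × ℤ → ℝ)
    (hnn : ∀ k, 0 ≤ μ k)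
    (h₁nn : ∀ k, 0 ≤ μ₁ k)
    (hsupp : ∀ k : ℤ × ℤ, k.1 < -1 ∨ k.2 < -1 → μ k = 0)
    (h₁supp : ∀ k : ℤ × ℤ, k.1 < -1 ∨ k.2 < 0 → μ₁ k = 0)
    (h₁vert : ∃ k : ℤ × ℤ, 0 < k.2 ∧ 0 < μ₁ k)
    (hirr : ∀ j k : ℤ × ℤ, ∃ n, 0 < iterK (homK μ) n j k)
    (hfin : ∃ U : Set (ℝ × ℝ), IsOpen U ∧
      {q : ℝ × ℝ | 0 < q.1 ∧ 0 < q.2 ∧ genG μ q.1 q.2 ≤ 1} ⊆ U ∧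
      ∀ q ∈ U, Summable (fun k : ℤ × ℤ => μ k * q.1 ^ k.1 * q.2 ^ k.2) ∧
        Summable (fun k : ℤ × ℤ => μ₁ k * q.1 ^ k.1 * q.2 ^ k.2))
    (xsP xssP xst xsst : ℝ)
    (hproj : {x : ℝ | 0 < x ∧ ∃ y : ℝ, 0 < y ∧ genG μ x y ≤ 1} = Set.Icc xsP xssP)
    (h₁proj : {x : ℝ | 0 < x ∧ ∃ y : ℝ, 0 < y ∧ genG μ x y ≤ 1 ∧ genG μ₁ x y ≤ 1} =
      Set.Icc xst xsst)
    (hchain : xsP ≤ xst ∧ xst < xsst ∧ xsst ≤ xssP)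
    (Y₁ : ℝ → ℝ)
    (hY₁ : ∀ x ∈ Set.Icc xsP xssP, 0 < Y₁ x ∧ genG μ x (Y₁ x) = 1 ∧
      ∀ y : ℝ, 0 < y → genG μ x y = 1 → Y₁ x ≤ y) :
    StrictConvexOn ℝ (Set.Icc xsP xssP) (fun x => genG μ₁ x (Y₁ x)) ∧
    (xsst < xssP →
      genG μ₁ xsst (Y₁ xsst) = 1 ∧
      (∀ x ∈ Set.Ioo xst xsst, genG μ₁ x (Y₁ x) < 1) ∧
      ∃ c : ℝ, 0 < c ∧ HasDerivAt (fun x => genG μ₁ x (Y₁ x)) c xsst) := by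
  obtain ⟨hPst, hst, hstP⟩ := hchain
  have hPP : xsP ≤ xssP := hPst.trans (hst.le.trans hstP)
  obtain ⟨U, -, hDU, hU⟩ := hfin
  have hμsupp : ∀ k : ℤ × ℤ, k.2 < -1 → μ k = 0 := fun k hk => hsupp k (.inr hk)
  have hμ₁supp : ∀ k : ℤ × ℤ, k.2 < 0 → μ₁ k = 0 := fun k hk => h₁supp k (.inr hk)
  have hpos : Icc xsP xssP ⊆ Ioi 0 := fun x hx => (hproj.symm ▸ hx).1
  have hsum (x) (hx : x ∈ Icc xsP xssP) (y) (hy : 0 < y) (hle : genG μ x y ≤ 1) :=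
    hU (x, y) (hDU ⟨hpos hx, hy, hle⟩)
  obtain ⟨b, hb, ⟨j₀, hj₀, hj₁, hbj₀⟩, hφ⟩ := exists_hasSum_zpow_genG hnn hμsupp hirr h₁nn
    hμ₁supp h₁vert (nonempty_Icc.2 hPP) hpos hY₁
    fun x hx => hsum x hx _ (hY₁ x hx).1 (hY₁ x hx).2.1.le
  have hconv := strictConvexOn_of_hasSum_zpow (convex_Icc _ _) hpos hb hj₀ hj₁ hbj₀ hφ
  refine ⟨hconv, fun hlt => ?_⟩
  have hlevel (x) (hx : x ∈ Icc xsP xssP) : genG μ₁ x (Y₁ x) ≤ 1 ↔ x ∈ Icc xst xsst := by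
    rw [← h₁proj]
    exact (genG_minRoot_le_one_iff hnn hμsupp (exists_jump_down hnn hμsupp hirr) h₁nn hμ₁supp
      (hpos hx) (hY₁ x hx) (hsum x hx)).trans (and_iff_right (hpos hx)).symm
  have hdiff := differentiableAt_of_hasSum_zpow (hpos (left_mem_Icc.2 hPP)) hb hφ
    ⟨hPst.trans_lt hst, hlt⟩
  obtain ⟨hone, hbelow, hderiv⟩ := hconv.sublevel_eq_Icc hlevel hPst hst hlt hdiff
  exact ⟨hone, hbelow, _, hderiv, hdiff.hasDerivAt⟩

/-- The function `x ↦ φ₁(x, Y₁(x))` is strictly convex on `[x*_P, x**_P]`, and when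
`x** < x**_P`: (a) its value at `x**` is `1`; (b) it is `< 1` on `(x*, x**)`;
(c) its derivative at `x**` is strictly positive (so `x**` is a simple zero of
`1 − φ₁(·, Y₁(·))`). -/
theorem phi1_Y1_strictly_convex_and_simple_zero
    (μ μ₁ : ℤ × ℤ → ℝ)
    (hnn : ∀ k, 0 ≤ μ k) (hprob : ∑' k : ℤ × ℤ, μ k = 1)
    (h₁nn : ∀ k, 0 ≤ μ₁ k) (h₁mass : ∑' k : ℤ × ℤ, μ₁ k ≤ 1)
    (hsupp : ∀ k : ℤ × ℤ, k.1 < -1 ∨ k.2 < -1 → μ k = 0)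
    (h₁supp : ∀ k : ℤ × ℤ, k.1 < -1 ∨ k.2 < 0 → μ₁ k = 0)
    (h₁vert : ∃ k : ℤ × ℤ, 0 < k.2 ∧ 0 < μ₁ k)
    (hirr : ∀ j k : ℤ × ℤ, ∃ n, 0 < iterK (homK μ) n j k)
    (hcpt : IsCompact {q : ℝ × ℝ | 0 < q.1 ∧ 0 < q.2 ∧ genG μ q.1 q.2 ≤ 1})
    (hint : (interior {q : ℝ × ℝ | 0 < q.1 ∧ 0 < q.2 ∧ genG μ q.1 q.2 ≤ 1}).Nonempty)
    (hfin : ∃ U : Set (ℝ × ℝ), IsOpen U ∧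
      {q : ℝ × ℝ | 0 < q.1 ∧ 0 < q.2 ∧ genG μ q.1 q.2 ≤ 1} ⊆ U ∧
      ∀ q ∈ U, Summable (fun k : ℤ × ℤ => μ k * q.1 ^ k.1 * q.2 ^ k.2) ∧
        Summable (fun k : ℤ × ℤ => μ₁ k * q.1 ^ k.1 * q.2 ^ k.2))
    (hintDD₁ : (interior {q : ℝ × ℝ | 0 < q.1 ∧ 0 < q.2 ∧ genG μ q.1 q.2 ≤ 1 ∧
      genG μ₁ q.1 q.2 ≤ 1}).Nonempty)
    (xsP xssP xst xsst : ℝ)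
    (hproj : {x : ℝ | 0 < x ∧ ∃ y : ℝ, 0 < y ∧ genG μ x y ≤ 1} = Set.Icc xsP xssP)
    (h₁proj : {x : ℝ | 0 < x ∧ ∃ y : ℝ, 0 < y ∧ genG μ x y ≤ 1 ∧ genG μ₁ x y ≤ 1} =
      Set.Icc xst xsst)
    (hchain : xsP ≤ xst ∧ xst < xsst ∧ xsst ≤ xssP)
    (Y₁ : ℝ → ℝ)
    (hY₁ : ∀ x ∈ Set.Icc xsP xssP, 0 < Y₁ x ∧ genG μ x (Y₁ x) = 1 ∧
      ∀ y : ℝ, 0 < y → genG μ x y = 1 → Y₁ x ≤ y) :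
    StrictConvexOn ℝ (Set.Icc xsP xssP) (fun x => genG μ₁ x (Y₁ x)) ∧
    (xsst < xssP →
      genG μ₁ xsst (Y₁ xsst) = 1 ∧
      (∀ x ∈ Set.Ioo xst xsst, genG μ₁ x (Y₁ x) < 1) ∧
      ∃ c : ℝ, 0 < c ∧ HasDerivAt (fun x => genG μ₁ x (Y₁ x)) c xsst) :=
  phi1_Y1_strictly_convex_and_simple_zero_general μ μ₁ hnn h₁nn hsupp h₁supp h₁vert hirr hfin xsP
    xssP xst xsst hproj h₁proj hchain Y₁ hY₁
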